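/- arXiv:1902.07241 — 5 statements merged into one kernel-verified Lean document; each statement's English description precedes it below -/
import Mathlib

section
/- There exists a digraph D containing a Hamiltonian directed path (a directed path passing through every vertex of D) whose dominator chromatic number is strictly less than |V(D)|. -/
/-- `c` is a dominator coloring of the digraph with arc relation `A`: a proper coloring of
the underlying undirected graph such that every vertex with at least one out-neighbor
dominates some (nonempty) color class. -/
def IsDominatorColoring {V : Type*} (A : V → V → Prop) {k : ℕ} (c : V → Fin k) : Prop :=
  (∀ u v, A u v → c u ≠ c v) ∧
    ∀ v, (∃ u, A v u) → ∃ i : Fin k, (∃ u, c u = i) ∧ ∀ u, c u = i → A v u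

/-- The dominator chromatic number of a digraph: the least number of colors in a
dominator coloring. -/
noncomputable def domChrom {V : Type*} (A : V → V → Prop) : ℕ :=
  sInf {k | ∃ c : V → Fin k, IsDominatorColoring A c}

/-- `A` is an orientation of the simple graph `G`. -/
def IsOrientation {V : Type*} (G : SimpleGraph V) (A : V → V → Prop) : Prop :=
  ∀ u v, (G.Adj u v ↔ (A u v ∨ A v u)) ∧ ¬(A u v ∧ A v u)

/-- The minimum dominator chromatic number over all orientations of `G`. -/
noncomputable def minOrientDomChrom {V : Type*} (G : SimpleGraph V) : ℕ :=
  sInf {k | ∃ A : V → V → Prop, IsOrientation G A ∧ ∃ c : V → Fin k, IsDominatorColoring A c}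

def pathWithBackArc (u v : Fin 4) : Prop :=
  (u : ℕ) + 1 = v ∨ (u = 2 ∧ v = 0)

instance : DecidableRel pathWithBackArc := fun u v => by
  unfold pathWithBackArc
  infer_instance

theorem domChrom_le_of_isDominatorColoring {V : Type*} {A : V → V → Prop} {k : ℕ}
    (c : V → Fin k) (hc : IsDominatorColoring A c) : domChrom A ≤ k :=
  Nat.sInf_le ⟨c, hc⟩

theorem pathWithBackArc_irrefl (v : Fin 4) : ¬ pathWithBackArc v v := by
  revert v
  decide

theorem pathWithBackArc_asymm (u v : Fin 4) : ¬ (pathWithBackArc u v ∧ pathWithBackArc v u) := by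
  revert u v
  decide

-- The arc `2 → 0` lets vertex `2` dominate the class `{0, 3}`, so `0` and `3` share a color.
theorem isDominatorColoring_pathWithBackArc :
    IsDominatorColoring pathWithBackArc (![0, 1, 2, 0] : Fin 4 → Fin 3) := by
  unfold IsDominatorColoring
  decide

/-- There exists a digraph `D` containing a Hamiltonian directed path whose
dominator chromatic number is strictly less than `|V(D)|`. -/
theorem exists_hamiltonianPath_domChrom_lt_card :
    ∃ (n : ℕ) (A : Fin n → Fin n → Prop),
      (∀ v, ¬ A v v) ∧ (∀ u v, ¬ (A u v ∧ A v u)) ∧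
      (∃ p : Fin n ≃ Fin n, ∀ i j : Fin n, (i : ℕ) + 1 = (j : ℕ) → A (p i) (p j)) ∧
      domChrom A < n := by
  refine ⟨4, pathWithBackArc, pathWithBackArc_irrefl, pathWithBackArc_asymm,
    ⟨Equiv.refl _, fun i j h => Or.inl h⟩, ?_⟩
  calc domChrom pathWithBackArc
      ≤ 3 := domChrom_le_of_isDominatorColoring _ isDominatorColoring_pathWithBackArc
    _ < 4 := by norm_num
end

section
/- Let D be an orientation of the star graph K_{1,k} (k ≥ 1) with central vertex v. Then 2 ≤ χ_d(D) ≤ 3, where χ_d(D) denotes the dominator chromatic number of the digraph D. Moreover, χ_d(D) = 2 if and only if all arcs of D are oriented similarly with respect to v (that is, either every arc points out of v or every arc points into v), and χ_d(D) = 3 otherwise. -/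
section DominatorColoring

variable {V : Type*} {A : V → V → Prop}

theorem domChrom_le {n : ℕ} {c : V → Fin n} (hc : IsDominatorColoring A c) : domChrom A ≤ n :=
  Nat.sInf_le ⟨c, hc⟩

theorem le_domChrom {n : ℕ} (hne : ∃ m, ∃ c : V → Fin m, IsDominatorColoring A c)
    (h : ∀ m (c : V → Fin m), IsDominatorColoring A c → n ≤ m) : n ≤ domChrom A := by
  obtain ⟨c, hc⟩ := Nat.sInf_mem hne
  exact h _ c hc

theorem IsDominatorColoring.two_le_of_arc {m : ℕ} {c : V → Fin m} (hc : IsDominatorColoring A c)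
    {u v : V} (huv : A u v) : 2 ≤ m := by
  have hne : (c u : ℕ) ≠ c v := Fin.val_ne_of_ne (hc.1 u v huv)
  have := (c u).isLt
  have := (c v).isLt
  omega

end DominatorColoring

abbrev starGraph (α : Type*) : SimpleGraph (Option α) :=
  SimpleGraph.fromRel fun x _ => x = none

namespace IsOrientation

variable {V : Type*} {G : SimpleGraph V} {A : V → V → Prop}

theorem adj_of_arc (hA : IsOrientation G A) {u v : V} (h : A u v) : G.Adj u v :=
  (hA u v).1.mpr (Or.inl h)

theorem arc_or_arc_of_adj (hA : IsOrientation G A) {u v : V} (h : G.Adj u v) : A u v ∨ A v u :=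
  (hA u v).1.mp h

theorem not_arc_of_arc (hA : IsOrientation G A) {u v : V} (h : A u v) : ¬ A v u :=
  fun h' => (hA u v).2 ⟨h, h'⟩

end IsOrientation

section Star

variable {α : Type*} {A : Option α → Option α → Prop}

theorem IsOrientation.star_arc_or_arc (hA : IsOrientation (starGraph α) A) (i : α) :
    A none (some i) ∨ A (some i) none :=
  hA.arc_or_arc_of_adj (by simp [SimpleGraph.fromRel_adj])

theorem IsOrientation.star_not_arc_none_none (hA : IsOrientation (starGraph α) A) :
    ¬ A none none :=
  fun h => (hA.adj_of_arc h).ne rfl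

theorem IsOrientation.star_not_arc_some_some (hA : IsOrientation (starGraph α) A)
    (i j : α) : ¬ A (some i) (some j) :=
  fun h => by simpa [SimpleGraph.fromRel_adj] using hA.adj_of_arc h

def starThreeColoring (A : Option α → Option α → Prop) [DecidablePred fun i => A none (some i)] :
    Option α → Fin 3
  | none => 2
  | some i => if A none (some i) then 1 else 0

theorem isDominatorColoring_starThreeColoring (hA : IsOrientation (starGraph α) A)
    [DecidablePred fun i => A none (some i)] : IsDominatorColoring A (starThreeColoring A) := by
  have leaf_ne_center (i : α) : starThreeColoring A (some i) ≠ starThreeColoring A none := by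
    simp only [starThreeColoring]; split <;> decide
  refine ⟨?_, ?_⟩
  · rintro (_ | i) (_ | j) h
    · exact absurd h hA.star_not_arc_none_none
    · exact (leaf_ne_center j).symm
    · exact leaf_ne_center i
    · exact absurd h (hA.star_not_arc_some_some i j)
  · rintro (_ | i) ⟨(_ | j), h⟩
    · exact absurd h hA.star_not_arc_none_none
    · refine ⟨1, ⟨some j, by simp [starThreeColoring, h]⟩, ?_⟩
      rintro (_ | l) hl
      · simp [starThreeColoring] at hl
      · by_contra h'
        simp [starThreeColoring, h'] at hl
    · refine ⟨2, ⟨none, rfl⟩, ?_⟩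
      rintro (_ | l) hl
      · exact h
      · exact absurd hl (leaf_ne_center l)
    · exact absurd h (hA.star_not_arc_some_some i j)

theorem IsDominatorColoring.two_le_of_star [Nonempty α] (hA : IsOrientation (starGraph α) A)
    {m : ℕ} {c : Option α → Fin m} (hc : IsDominatorColoring A c) : 2 ≤ m :=
  (hA.star_arc_or_arc (Classical.arbitrary α)).elim hc.two_le_of_arc hc.two_le_of_arc

def starTwoColoring : Option α → Fin 2
  | none => 0
  | some _ => 1

theorem isDominatorColoring_starTwoColoring (hA : IsOrientation (starGraph α) A)
    (hsim : (∀ i, A none (some i)) ∨ (∀ i, A (some i) none)) :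
    IsDominatorColoring A starTwoColoring := by
  refine ⟨?_, ?_⟩
  · rintro (_ | i) (_ | j) h
    · exact absurd h hA.star_not_arc_none_none
    · simp [starTwoColoring]
    · simp [starTwoColoring]
    · exact absurd h (hA.star_not_arc_some_some i j)
  · rintro (_ | i) ⟨(_ | j), h⟩
    · exact absurd h hA.star_not_arc_none_none
    · have hout : ∀ l, A none (some l) :=
        hsim.resolve_right fun hin => hA.not_arc_of_arc h (hin j)
      exact ⟨1, ⟨some j, rfl⟩, by rintro (_ | l) hl <;> simp_all [starTwoColoring]⟩
    · exact ⟨0, ⟨none, rfl⟩, by rintro (_ | l) hl <;> simp_all [starTwoColoring]⟩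
    · exact absurd h (hA.star_not_arc_some_some i j)

theorem not_isDominatorColoring_fin_two_of_mixed (hA : IsOrientation (starGraph α) A)
    (hmix : ¬ ((∀ i, A none (some i)) ∨ (∀ i, A (some i) none))) (c : Option α → Fin 2) :
    ¬ IsDominatorColoring A c := by
  rintro ⟨hproper, hdom⟩
  simp only [not_or, not_forall] at hmix
  obtain ⟨⟨i, hi⟩, ⟨j, hj⟩⟩ := hmix
  have hin : A (some i) none := (hA.star_arc_or_arc i).resolve_left hi
  have hout : A none (some j) := (hA.star_arc_or_arc j).resolve_right hj
  obtain ⟨color, -, hcolor⟩ := hdom none ⟨some j, hout⟩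
  have hcenter : c none ≠ color := fun h => hA.star_not_arc_none_none (hcolor none h)
  have hleaf : c (some i) = color := by
    have := hproper _ _ hin
    omega
  exact hA.not_arc_of_arc hin (hcolor _ hleaf)

end Star

/-- For any orientation `A` of the star graph `K_{1,k}` (`k ≥ 1`, central
vertex `none`), `2 ≤ χ_d(A) ≤ 3`; moreover `χ_d(A) = 2` iff all arcs are oriented
similarly with respect to the center, and `χ_d(A) = 3` otherwise. -/
theorem domChrom_star_orientation (k : ℕ) (hk : 1 ≤ k)
    (A : Option (Fin k) → Option (Fin k) → Prop)
    (hA : IsOrientation (SimpleGraph.fromRel (fun x _ => x = (none : Option (Fin k)))) A) :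
    (2 ≤ domChrom A ∧ domChrom A ≤ 3) ∧
    (domChrom A = 2 ↔ ((∀ i, A none (some i)) ∨ (∀ i, A (some i) none))) ∧
    (¬ ((∀ i, A none (some i)) ∨ (∀ i, A (some i) none)) → domChrom A = 3) := by
  classical
  have : Nonempty (Fin k) := ⟨⟨0, hk⟩⟩
  have hthree := isDominatorColoring_starThreeColoring hA
  have hupper : domChrom A ≤ 3 := domChrom_le hthree
  have hlower : 2 ≤ domChrom A := le_domChrom ⟨3, _, hthree⟩ fun _ _ hc => hc.two_le_of_star hA
  have hmixed (hmix : ¬ ((∀ i, A none (some i)) ∨ (∀ i, A (some i) none))) : domChrom A = 3 := by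
    refine le_antisymm hupper (le_domChrom ⟨3, _, hthree⟩ fun m c hc => ?_)
    obtain hle | rfl | hge : m < 2 ∨ m = 2 ∨ 3 ≤ m := by omega
    · exact absurd (hc.two_le_of_star hA) (by omega)
    · exact absurd hc (not_isDominatorColoring_fin_two_of_mixed hA hmix c)
    · exact hge
  refine ⟨⟨hlower, hupper⟩, ⟨fun htwo => ?_, fun hsim => ?_⟩, hmixed⟩
  · by_contra hmix
    have := hmixed hmix
    omega
  · exact le_antisymm (domChrom_le (isDominatorColoring_starTwoColoring hA hsim)) hlower
end

section
/- Let m, n be natural numbers with m < n. Then the minimum, over all orientations of the path P_m on m vertices, of the dominator chromatic number is at most the minimum, over all orientations of the path P_n on n vertices, of the dominator chromatic number; that is, χ_d(P_m) ≤ χ_d(P_n). -/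
/-!
Deleting the last vertex `w` of a path does not increase the number of colors needed: the
restricted coloring is still a dominator coloring unless the unique in-neighbor `x` of `w` was
dominating only the class `{w}`. In that case the color of `w` is missing below `w`, and giving it
to an out-neighbor `y ≠ w` of `x` produces the singleton class `{y}` dominated by `x`, while every
vertex that dominated the old class of `y` through `y` now dominates `{y}` instead.
-/

open Function

section Orientation

variable {V W : Type*} {G : SimpleGraph V} {A : V → V → Prop}

theorem IsOrientation.adj (hA : IsOrientation G A) {u v : V} (h : A u v) : G.Adj u v :=
  ((hA u v).1).2 (Or.inl h)

theorem IsOrientation.irrefl (hA : IsOrientation G A) (v : V) : ¬A v v :=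
  fun h => (hA.adj h).ne rfl

theorem IsOrientation.comap (hA : IsOrientation G A) (f : W → V) :
    IsOrientation (G.comap f) (A on f) :=
  fun u v => hA (f u) (f v)

theorem SimpleGraph.exists_isOrientation (G : SimpleGraph V) : ∃ A, IsOrientation G A := by
  refine ⟨fun u v => G.Adj u v ∧ WellOrderingRel u v, fun u v => ⟨⟨fun h => ?_, ?_⟩, ?_⟩⟩
  · rcases trichotomous_of WellOrderingRel u v with huv | rfl | hvu
    · exact Or.inl ⟨h, huv⟩
    · exact (h.ne rfl).elim
    · exact Or.inr ⟨h.symm, hvu⟩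
  · rintro (h | h)
    exacts [h.1, h.1.symm]
  · rintro ⟨⟨-, huv⟩, -, hvu⟩
    exact asymm huv hvu

end Orientation

section DominatorColoring

variable {V W : Type*} {A : V → V → Prop} {k : ℕ} {c : V → Fin k}

theorem isDominatorColoring_of_injective (hA : ∀ v, ¬A v v) (hc : Injective c) :
    IsDominatorColoring A c := by
  refine ⟨fun u v huv hcuv => hA u (hc hcuv ▸ huv), ?_⟩
  rintro v ⟨u, hu⟩
  exact ⟨c u, ⟨u, rfl⟩, fun u' hu' => hc hu' ▸ hu⟩

-- `f` enumerates the vertices other than `w`, so `A on f` is the digraph with `w` deleted.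
variable {f : W → V} {w : V}

theorem IsDominatorColoring.comp_of_compl_singleton (hc : IsDominatorColoring A c)
    (hf : ∀ v, v ≠ w → ∃ u, f u = v)
    (h : (∃ u, c (f u) = c w) ∨ ∀ u v, A (f u) w → ¬A (f u) (f v)) :
    IsDominatorColoring (A on f) (c ∘ f) := by
  refine ⟨fun u v huv => hc.1 _ _ huv, ?_⟩
  rintro v ⟨u, hu⟩
  obtain ⟨i, ⟨u₀, rfl⟩, hdom⟩ := hc.2 (f v) ⟨f u, hu⟩
  refine ⟨c u₀, ?_, fun u' hu' => hdom (f u') hu'⟩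
  by_cases hu₀ : u₀ = w
  · subst hu₀
    rcases h with h | h
    exacts [h, (h v u (hdom u₀ rfl) hu).elim]
  · obtain ⟨u', rfl⟩ := hf u₀ hu₀
    exact ⟨u', rfl⟩

theorem IsDominatorColoring.update_comp_of_compl_singleton [DecidableEq W]
    (hc : IsDominatorColoring A c) (hf : ∀ v, v ≠ w → ∃ u, f u = v)
    (hin : ∀ x x', A x w → A x' w → x = x') (habsent : ∀ u, c (f u) ≠ c w)
    {x : V} {y : W} (hxw : A x w) (hxy : A x (f y)) :
    IsDominatorColoring (A on f) (update (c ∘ f) y (c w)) := by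
  have hA : ∀ v, ¬A v v := fun v hv => hc.1 v v hv rfl
  have hclass : ∀ u, update (c ∘ f) y (c w) u = c w ↔ u = y := fun u => by
    by_cases hu : u = y
    · simp [hu]
    · simp [habsent u, hu]
  refine ⟨fun u v huv => ?_, ?_⟩
  · by_cases hu : u = y <;> by_cases hv : v = y
    · exact (hA _ (hu ▸ hv ▸ huv)).elim
    · simpa [hu, update_of_ne hv] using (habsent v).symm
    · simpa [hv, update_of_ne hu] using habsent u
    · simpa [update_of_ne hu, update_of_ne hv] using hc.1 _ _ huv
  rintro v ⟨u, hu⟩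
  obtain ⟨i, ⟨u₀, rfl⟩, hdom⟩ := hc.2 (f v) ⟨f u, hu⟩
  have hdom_y (hvy : A (f v) (f y)) : ∃ j, (∃ u, update (c ∘ f) y (c w) u = j) ∧
      ∀ u, update (c ∘ f) y (c w) u = j → (A on f) v u :=
    ⟨c w, ⟨y, (hclass y).2 rfl⟩, fun u hu => ((hclass u).1 hu) ▸ hvy⟩
  by_cases hu₀ : u₀ = w
  · subst hu₀
    exact hdom_y (hin _ _ (hdom u₀ rfl) hxw ▸ hxy)
  obtain ⟨u₁, rfl⟩ := hf u₀ hu₀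
  by_cases hy : u₁ = y
  · exact hdom_y (hy ▸ hdom _ rfl)
  refine ⟨c (f u₁), ⟨u₁, update_of_ne hy _ _⟩, fun u' hu' => hdom (f u') ?_⟩
  have hu'y : u' ≠ y := by
    rintro rfl
    exact habsent u₁ (by simpa using hu'.symm)
  simpa [update_of_ne hu'y] using hu'

theorem IsDominatorColoring.exists_comp_of_compl_singleton (hc : IsDominatorColoring A c)
    (hf : ∀ v, v ≠ w → ∃ u, f u = v) (hin : ∀ x x', A x w → A x' w → x = x') :
    ∃ c' : W → Fin k, IsDominatorColoring (A on f) c' := by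
  classical
  by_cases hpresent : ∃ u, c (f u) = c w
  · exact ⟨_, hc.comp_of_compl_singleton hf (Or.inl hpresent)⟩
  by_cases hneeds : ∃ u y, A (f u) w ∧ A (f u) (f y)
  · obtain ⟨u, y, huw, huy⟩ := hneeds
    exact ⟨_, hc.update_comp_of_compl_singleton hf hin (not_exists.1 hpresent) huw huy⟩
  · push Not at hneeds
    exact ⟨_, hc.comp_of_compl_singleton hf (Or.inr hneeds)⟩

end DominatorColoring

section MinOrientDomChrom

variable {V W : Type*}

theorem exists_isOrientation_isDominatorColoring [Finite V] (G : SimpleGraph V) :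
    ∃ k, ∃ A : V → V → Prop, IsOrientation G A ∧ ∃ c : V → Fin k, IsDominatorColoring A c := by
  obtain ⟨A, hA⟩ := G.exists_isOrientation
  exact ⟨_, A, hA, _, isDominatorColoring_of_injective hA.irrefl (Finite.equivFin V).injective⟩

theorem minOrientDomChrom_le_of_forall [Finite V] {G : SimpleGraph V} {H : SimpleGraph W}
    (h : ∀ k (A : V → V → Prop) (c : V → Fin k), IsOrientation G A → IsDominatorColoring A c →
      ∃ B, IsOrientation H B ∧ ∃ c' : W → Fin k, IsDominatorColoring B c') :
    minOrientDomChrom H ≤ minOrientDomChrom G := by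
  obtain ⟨A, hA, c, hc⟩ := Nat.sInf_mem (exists_isOrientation_isDominatorColoring G)
  exact Nat.sInf_le (h _ A c hA hc)

end MinOrientDomChrom

theorem SimpleGraph.comap_castSucc_pathGraph (n : ℕ) :
    (pathGraph (n + 1)).comap Fin.castSucc = pathGraph n := by
  ext u v
  simp [pathGraph_adj]

theorem SimpleGraph.pathGraph_adj_last_iff {n : ℕ} {v : Fin (n + 1)} :
    (pathGraph (n + 1)).Adj v (Fin.last n) ↔ v.val + 1 = n := by
  rw [pathGraph_adj, Fin.val_last]
  have := v.isLt
  omega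

theorem minOrientDomChrom_pathGraph_le_succ (n : ℕ) :
    minOrientDomChrom (SimpleGraph.pathGraph n) ≤
      minOrientDomChrom (SimpleGraph.pathGraph (n + 1)) := by
  refine minOrientDomChrom_le_of_forall fun k A c hA hc => ⟨A on Fin.castSucc, ?_, ?_⟩
  · simpa [SimpleGraph.comap_castSucc_pathGraph] using hA.comap Fin.castSucc
  · refine hc.exists_comp_of_compl_singleton (w := Fin.last n)
      (fun v hv => Fin.exists_castSucc_eq.2 hv) fun x x' hx hx' => ?_
    have := SimpleGraph.pathGraph_adj_last_iff.1 (hA.adj hx)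
    have := SimpleGraph.pathGraph_adj_last_iff.1 (hA.adj hx')
    exact Fin.ext (by omega)

/-- For natural numbers `m < n`, the minimum dominator chromatic number over
all orientations of `P_m` is at most that of `P_n`. -/
theorem minOrientDomChrom_path_mono (m n : ℕ) (h : m < n) :
    minOrientDomChrom (SimpleGraph.pathGraph m) ≤
      minOrientDomChrom (SimpleGraph.pathGraph n) :=
  monotone_nat_of_le_succ minOrientDomChrom_pathGraph_le_succ h.le
end

section
/- The minimum, over all orientations of the path P_6 on 6 vertices, of the dominator chromatic number equals 3; in particular, the orientation of P_6 = v_1v_2v_3v_4v_5v_6 with out-degree sequence {1,0,2,0,2,0} admits a dominator coloring with 3 colors. -/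
open SimpleGraph

namespace IsDominatorColoring

variable {V : Type*} {G : SimpleGraph V} {A : V → V → Prop} {k : ℕ} {c : V → Fin k}

lemma ne_of_adj (hc : IsDominatorColoring A c) (hA : IsOrientation G A) {u v : V}
    (huv : G.Adj u v) : c u ≠ c v := by
  rcases (hA u v).1.mp huv with h | h
  · exact hc.1 u v h
  · exact (hc.1 v u h).symm

lemma exists_colorClass_subset_neighborSet (hc : IsDominatorColoring A c)
    (hA : IsOrientation G A) {v u : V} (hvu : A v u) : ∃ i, ∀ w, c w = i → G.Adj v w := by
  obtain ⟨i, -, hdom⟩ := hc.2 v ⟨u, hvu⟩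
  exact ⟨i, fun w hw => (hA v w).1.mpr (Or.inl (hdom w hw))⟩

end IsDominatorColoring

lemma Fin.two_eq_of_ne_of_ne {a b d : Fin 2} (hab : a ≠ b) (hbd : b ≠ d) : a = d := by
  revert a b d; decide

lemma SimpleGraph.pathGraph_le_add_two_of_adj_of_adj {n : ℕ} {v w x : Fin n}
    (hw : (pathGraph n).Adj v w) (hx : (pathGraph n).Adj v x) : (x : ℕ) ≤ w + 2 := by
  rw [pathGraph_adj] at hw hx
  omega

lemma SimpleGraph.pathGraph_two_coloring_eq_of_add_two {n : ℕ} {c : Fin n → Fin 2}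
    (hc : ∀ u v, (pathGraph n).Adj u v → c u ≠ c v) {i j : Fin n} (hij : (i : ℕ) + 2 = j) :
    c i = c j :=
  have hm : (i : ℕ) + 1 < n := by omega
  Fin.two_eq_of_ne_of_ne (hc i ⟨i + 1, hm⟩ (pathGraph_adj.mpr (Or.inl rfl)))
    (hc ⟨i + 1, hm⟩ j (pathGraph_adj.mpr (Or.inl (by omega))))

/-- With two colors a proper coloring of a path alternates, so each color class contains two
vertices at distance four once `n ≥ 6`; but the class dominated by a non-sink vertex lies in
its neighbourhood, whose vertices are at distance at most two. -/
theorem three_le_of_isDominatorColoring_pathGraph {n k : ℕ} (hn : 6 ≤ n)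
    {A : Fin n → Fin n → Prop} (hA : IsOrientation (pathGraph n) A) {c : Fin n → Fin k}
    (hc : IsDominatorColoring A c) : 3 ≤ k := by
  let v : Fin 6 → Fin n := Fin.castLE hn
  have h01 : (pathGraph n).Adj (v 0) (v 1) := pathGraph_adj.mpr (Or.inl rfl)
  have hne01 := hc.ne_of_adj hA h01
  by_contra hk
  obtain hk1 | rfl : k ≤ 1 ∨ k = 2 := by omega
  · exact hne01 (Fin.ext (by have := (c (v 0)).isLt; have := (c (v 1)).isLt; omega))
  have hproper : ∀ u w, (pathGraph n).Adj u w → c u ≠ c w := fun u w => hc.ne_of_adj hA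
  have hstep : ∀ i j : Fin 6, (i : ℕ) + 2 = j → c (v i) = c (v j) :=
    fun i j h => pathGraph_two_coloring_eq_of_add_two hproper h
  obtain ⟨s, t, hst⟩ : ∃ s t, A s t := by
    rcases (hA _ _).1.mp h01 with h | h
    exacts [⟨_, _, h⟩, ⟨_, _, h⟩]
  obtain ⟨i, hi⟩ := hc.exists_colorClass_subset_neighborSet hA hst
  rcases eq_or_ne i (c (v 0)) with rfl | hi0
  · have h04 := (hstep 0 2 rfl).trans (hstep 2 4 rfl)
    have := pathGraph_le_add_two_of_adj_of_adj (hi (v 0) rfl) (hi (v 4) h04.symm)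
    simp [v] at this
  · have hi1 : c (v 1) = i := Fin.two_eq_of_ne_of_ne hne01.symm hi0.symm
    have h15 := (hstep 1 3 rfl).trans (hstep 3 5 rfl)
    have := pathGraph_le_add_two_of_adj_of_adj (hi (v 1) hi1) (hi (v 5) (h15.symm.trans hi1))
    simp [v] at this

def p6Orientation : Fin 6 → Fin 6 → Prop := fun i j =>
  ((i : ℕ) = 0 ∧ (j : ℕ) = 1) ∨ ((i : ℕ) = 2 ∧ (j : ℕ) = 1) ∨
  ((i : ℕ) = 2 ∧ (j : ℕ) = 3) ∨ ((i : ℕ) = 4 ∧ (j : ℕ) = 3) ∨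
  ((i : ℕ) = 4 ∧ (j : ℕ) = 5)

lemma p6Orientation_isOrientation : IsOrientation (pathGraph 6) p6Orientation := by
  unfold IsOrientation p6Orientation
  simp only [pathGraph_adj]
  decide

lemma p6Orientation_isDominatorColoring :
    IsDominatorColoring p6Orientation (![0, 2, 0, 1, 0, 1] : Fin 6 → Fin 3) := by
  unfold IsDominatorColoring p6Orientation
  constructor <;> decide

/-- The minimum dominator chromatic number over all orientations of `P₆`
equals `3`; in particular the orientation `v₁→v₂, v₃→v₂, v₃→v₄, v₅→v₄, v₅→v₆` (with
out-degree sequence `{1,0,2,0,2,0}`) admits a dominator coloring with `3` colors. -/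
theorem minOrientDomChrom_P6 :
    minOrientDomChrom (SimpleGraph.pathGraph 6) = 3 ∧
    ∃ c : Fin 6 → Fin 3,
      IsDominatorColoring
        (fun i j : Fin 6 =>
          ((i : ℕ) = 0 ∧ (j : ℕ) = 1) ∨ ((i : ℕ) = 2 ∧ (j : ℕ) = 1) ∨
          ((i : ℕ) = 2 ∧ (j : ℕ) = 3) ∨ ((i : ℕ) = 4 ∧ (j : ℕ) = 3) ∨
          ((i : ℕ) = 4 ∧ (j : ℕ) = 5)) c := by
  have hcol := p6Orientation_isDominatorColoring
  refine ⟨IsLeast.csInf_eq ⟨⟨_, p6Orientation_isOrientation, _, hcol⟩, ?_⟩, _, hcol⟩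
  rintro k ⟨A, hA, c, hc⟩
  exact three_le_of_isDominatorColoring_pathGraph le_rfl hA hc
end

section
/- For every n ≥ 7, let D̃_n be the digraph obtained from the directed cycle on vertices v_1, ..., v_n (arcs v_i → v_{i+1} and v_n → v_1) by adding one new vertex w together with an arc v_i → w for every 1 ≤ i ≤ n. Then D̃_n contains the directed cycle on n vertices as a subdigraph, the dominator chromatic number of D̃_n is at most 4, and the dominator chromatic number of the directed cycle on n vertices equals n; hence there are infinitely many pairs (D, H) of a digraph D and a subdigraph H of D with χ_d(H) > χ_d(D). -/
/-- The digraph `D̃_n`: the directed cycle on vertices `some i` (`i : Fin n`) together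
with a new vertex `none` and an arc `some i → none` for every `i`. -/
def tildeCycle (n : ℕ) : Option (Fin n) → Option (Fin n) → Prop := fun x y =>
  (∃ i j : Fin n, x = some i ∧ y = some j ∧ ((i : ℕ) + 1) % n = (j : ℕ)) ∨
  (∃ i : Fin n, x = some i ∧ y = none)

/-!
In the directed cycle every vertex has a single out-neighbour, so the color class it
dominates is the singleton of its successor; as every vertex is a successor, all color
classes are singletons and `χ_d = n`. Adding a vertex `w` that receives an arc from every
vertex lets each `v_i` dominate the class `{w}`, so a proper `3`-coloring of the cycle plus
a fourth color for `w` is a dominator coloring.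
-/

open Function

section Functional

variable {V : Type*} {f : V → V}

theorem IsDominatorColoring.injective_of_surjective {k : ℕ} {c : V → Fin k}
    (hc : IsDominatorColoring (fun u v => v = f u) c) (hf : Surjective f) : Injective c := by
  intro a b hab
  obtain ⟨u, rfl⟩ := hf a
  obtain ⟨i, ⟨x, hx⟩, hdom⟩ := hc.2 u ⟨f u, rfl⟩
  have hfu : c (f u) = i := by rw [← hdom x hx, hx]
  exact (hdom b (hab ▸ hfu)).symm

theorem isDominatorColoring_of_injective_s18 (hfix : ∀ v, f v ≠ v) {k : ℕ} {c : V → Fin k}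
    (hc : Injective c) : IsDominatorColoring (fun u v => v = f u) c :=
  ⟨fun u _ huv h => hfix u (huv ▸ hc h).symm, fun u _ => ⟨c (f u), ⟨f u, rfl⟩, fun _ hv => hc hv⟩⟩

theorem domChrom_eq_card_of_surjective [Fintype V] (hf : Surjective f) (hfix : ∀ v, f v ≠ v) :
    domChrom (fun u v => v = f u) = Fintype.card V := by
  have hmem : Fintype.card V ∈ {k | ∃ c : V → Fin k, IsDominatorColoring (fun u v => v = f u) c} :=
    ⟨Fintype.equivFin V, isDominatorColoring_of_injective_s18 hfix (Fintype.equivFin V).injective⟩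
  refine le_antisymm (Nat.sInf_le hmem) (le_csInf ⟨_, hmem⟩ ?_)
  rintro k ⟨c, hc⟩
  simpa using Fintype.card_le_of_injective c (hc.injective_of_surjective hf)

end Functional

section JoinSink

variable {V : Type*}

def joinSink (A : V → V → Prop) : Option V → Option V → Prop
  | some u, some v => A u v
  | some _, none => True
  | none, _ => False

theorem domChrom_joinSink_le {A : V → V → Prop} {G : SimpleGraph V} {k : ℕ}
    (hA : ∀ u v, A u v → G.Adj u v) (hG : G.Colorable k) : domChrom (joinSink A) ≤ k + 1 := by
  obtain ⟨C⟩ := hG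
  refine Nat.sInf_le ⟨fun x => x.elim (Fin.last k) fun v => (C v).castSucc, ?_, ?_⟩
  · rintro (_ | u) (_ | v) huv
    exacts [huv.elim, huv.elim, Fin.castSucc_ne_last _,
      fun h => C.valid (hA u v huv) (Fin.castSucc_injective _ h)]
  · rintro (_ | u) ⟨_, huv⟩
    · exact huv.elim
    refine ⟨Fin.last k, ⟨none, rfl⟩, ?_⟩
    rintro (_ | v) hv
    exacts [trivial, (Fin.castSucc_ne_last _ hv).elim]

end JoinSink

section Cycle

def cycleArc (n : ℕ) (i j : Fin n) : Prop := ((i : ℕ) + 1) % n = (j : ℕ)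

theorem cycleArc_iff {n : ℕ} [NeZero n] {i j : Fin n} : cycleArc n i j ↔ j = i + 1 := by
  rw [cycleArc, Fin.ext_iff, Fin.val_add, Fin.val_one', Nat.add_mod_mod, eq_comm]

theorem tildeCycle_eq_joinSink (n : ℕ) : tildeCycle n = joinSink (cycleArc n) := by
  funext x y
  cases x <;> cases y <;> simp [tildeCycle, joinSink, cycleArc]

theorem domChrom_cycleArc {n : ℕ} (hn : 2 ≤ n) : domChrom (cycleArc n) = n := by
  obtain ⟨m, rfl⟩ : ∃ m, n = m + 2 := ⟨n - 2, by omega⟩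
  have hcyc : cycleArc (m + 2) = fun i j => j = i + 1 :=
    funext₂ fun _ _ => propext cycleArc_iff
  rw [hcyc, domChrom_eq_card_of_surjective (f := (· + 1)) (Equiv.addRight 1).surjective (by simp),
    Fintype.card_fin]

theorem cycleArc_le_cycleGraph {n : ℕ} (hn : 2 ≤ n) (i j : Fin n) (h : cycleArc n i j) :
    (SimpleGraph.cycleGraph n).Adj i j := by
  obtain ⟨m, rfl⟩ : ∃ m, n = m + 2 := ⟨n - 2, by omega⟩
  rw [cycleArc_iff] at h
  simp [SimpleGraph.cycleGraph_adj, h]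

end Cycle

/-- For every `n ≥ 7`, `D̃_n` contains the directed cycle on `n` vertices
as a subdigraph, `χ_d(D̃_n) ≤ 4`, while the directed cycle on `n` vertices has
`χ_d = n`; hence there are infinitely many pairs of a digraph and a subdigraph whose
dominator chromatic number exceeds that of the ambient digraph. -/
theorem tildeCycle_counterexample (n : ℕ) (hn : 7 ≤ n) :
    (∃ f : Fin n → Option (Fin n), Function.Injective f ∧
        ∀ i j : Fin n, ((i : ℕ) + 1) % n = (j : ℕ) → tildeCycle n (f i) (f j)) ∧
    domChrom (tildeCycle n) ≤ 4 ∧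
    domChrom (fun i j : Fin n => ((i : ℕ) + 1) % n = (j : ℕ)) = n ∧
    domChrom (tildeCycle n) <
      domChrom (fun i j : Fin n => ((i : ℕ) + 1) % n = (j : ℕ)) := by
  have hcyc : domChrom (fun i j : Fin n => ((i : ℕ) + 1) % n = (j : ℕ)) = n :=
    domChrom_cycleArc (by omega)
  have htilde : domChrom (tildeCycle n) ≤ 4 := by
    rw [tildeCycle_eq_joinSink]
    exact domChrom_joinSink_le (cycleArc_le_cycleGraph (by omega))
      (SimpleGraph.cycleGraph.tricoloring n (by omega)).colorable
  exact ⟨⟨some, Option.some_injective _, fun i j h => Or.inl ⟨i, j, rfl, rfl, h⟩⟩,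
    htilde, hcyc, by omega⟩
end
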